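/- arXiv:2506.10955 — 4 statements merged into one kernel-verified Lean document; each statement's English description precedes it below -/
import Mathlib

section
/- Tweedie's formula for the OU process: if x_0 ~ q on ℝ^d with smooth density, and x_t = e^{-t} x_0 + √(1-e^{-2t}) z with z ~ N(0, Id) independent of x_0, then E[x_0 | x_t = x] = e^t x + (e^t - e^{-t}) ∇ ln q_t(x), where q_t is the density of x_t. -/
open Real MeasureTheory

/-- Isotropic Gaussian density on `ℝ^d` with covariance `v • Id`, centered at `0`,
evaluated at `y`. -/
noncomputable def gpdfE (d : ℕ) (v : ℝ) (y : EuclideanSpace ℝ (Fin d)) : ℝ :=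
  (2 * π * v) ^ (-(d : ℝ) / 2) * Real.exp (-‖y‖ ^ 2 / (2 * v))

section aux

open InnerProductSpace

variable {d : ℕ}

local notation "E" => EuclideanSpace ℝ (Fin d)

lemma gpdfE_pos {v : ℝ} (hv : 0 < v) (y : E) : 0 < gpdfE d v y := by
  unfold gpdfE
  have : (0:ℝ) < 2 * π * v := by positivity
  positivity

lemma gpdfE_le {v : ℝ} (hv : 0 < v) (y : E) :
    gpdfE d v y ≤ (2 * π * v) ^ (-(d : ℝ) / 2) := by
  unfold gpdfE
  have h1 : Real.exp (-‖y‖ ^ 2 / (2 * v)) ≤ 1 :=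
    Real.exp_le_one_iff.2 (by
      rw [div_nonpos_iff]; right
      constructor
      · have : (0:ℝ) ≤ ‖y‖ ^ 2 := by positivity
        linarith
      · positivity)
  have hc : (0:ℝ) ≤ (2 * π * v) ^ (-(d : ℝ) / 2) := by positivity
  calc (2 * π * v) ^ (-(d : ℝ) / 2) * Real.exp (-‖y‖ ^ 2 / (2 * v))
      ≤ (2 * π * v) ^ (-(d : ℝ) / 2) * 1 := by gcongr
    _ = _ := mul_one _

lemma gpdfE_continuous {v : ℝ} : Continuous (gpdfE d v) := by
  unfold gpdfE
  fun_prop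

lemma normsq_hasFDerivAt (y : E) :
    HasFDerivAt (fun z : E => ‖z‖ ^ 2) (toDual ℝ (EuclideanSpace ℝ (Fin d)) ((2:ℝ) • y)) y := by
  have h := (hasFDerivAt_id y).inner ℝ (hasFDerivAt_id y)
  have heq : (fun z : E => (inner ℝ z z : ℝ)) = fun z : E => ‖z‖ ^ 2 := by
    funext z; rw [real_inner_self_eq_norm_sq]
  simp only [id_eq] at h
  rw [heq] at h
  refine h.congr_fderiv ?_
  ext u
  simp only [InnerProductSpace.toDual_apply_apply, real_inner_smul_left,
    fderivInnerCLM_apply, ContinuousLinearMap.coe_comp', Function.comp_apply,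
    ContinuousLinearMap.prod_apply, ContinuousLinearMap.coe_id', id_eq]
  rw [real_inner_comm]
  ring

lemma gpdfE_hasFDerivAt {v : ℝ} (hv : 0 < v) (y : E) :
    HasFDerivAt (gpdfE d v)
      (toDual ℝ (EuclideanSpace ℝ (Fin d)) ((-v⁻¹ * gpdfE d v y) • y)) y := by
  have hφeq : (fun z : E => -‖z‖ ^ 2 / (2 * v)) = fun z : E => -(2 * v)⁻¹ * ‖z‖ ^ 2 := by
    funext z; ring
  have h1 : HasFDerivAt (fun z : E => -‖z‖ ^ 2 / (2 * v))
      ((-(2 * v)⁻¹ : ℝ) • toDual ℝ (EuclideanSpace ℝ (Fin d)) ((2:ℝ) • y)) y := by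
    rw [hφeq]; exact (normsq_hasFDerivAt y).const_mul _
  have h2 := (Real.hasDerivAt_exp (-‖y‖ ^ 2 / (2 * v))).comp_hasFDerivAt y h1
  have h3 := h2.const_mul ((2 * π * v) ^ (-(d : ℝ) / 2))
  have h4 : HasFDerivAt (gpdfE d v)
      ((2 * π * v) ^ (-(d:ℝ) / 2) • Real.exp (-‖y‖ ^ 2 / (2 * v)) •
        (-(2 * v)⁻¹ : ℝ) • toDual ℝ E ((2:ℝ) • y)) y := h3
  refine h4.congr_fderiv ?_
  ext u
  simp only [ContinuousLinearMap.coe_smul', Pi.smul_apply, toDual_apply_apply,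
    real_inner_smul_left, smul_eq_mul]
  unfold gpdfE
  field_simp

lemma integrand_hasFDerivAt {v a : ℝ} (hv : 0 < v) (c0 : ℝ) (x0 x' : E) :
    HasFDerivAt (fun z : E => c0 * gpdfE d v (z - a • x0))
      (toDual ℝ (EuclideanSpace ℝ (Fin d)) ((c0 * (-v⁻¹ * gpdfE d v (x' - a • x0))) • (x' - a • x0))) x' := by
  have hsub : HasFDerivAt (fun z : E => z - a • x0) (ContinuousLinearMap.id ℝ E) x' :=
    (hasFDerivAt_id x').sub_const _
  have h := ((gpdfE_hasFDerivAt hv (x' - a • x0)).comp x' hsub).const_mul c0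
  refine h.congr_fderiv ?_
  ext u
  simp only [ContinuousLinearMap.coe_smul', Pi.smul_apply, ContinuousLinearMap.coe_comp',
    Function.comp_apply, ContinuousLinearMap.coe_id', id_eq, toDual_apply_apply,
    real_inner_smul_left, smul_eq_mul]
  ring

end aux

/-- Tweedie's formula for the OU process: if `x_0 ~ q` (a smooth, integrable probability
density on `ℝ^d` with finite first moment) and `x_t = e^{-t} x_0 + √(1-e^{-2t}) z` with
`z ~ N(0, Id)` independent, then
`E[x_0 ∣ x_t = x] = e^t x + (e^t - e^{-t}) ∇ ln q_t(x)`,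
where `q_t` is the density of `x_t` (the convolution of the scaled density with a Gaussian),
the posterior mean is the ratio of the vector-valued integral of `x_0` against the joint
density to `q_t(x)`, and `∇` is the gradient. -/
theorem stmt2 (d : ℕ) (t : ℝ) (ht : 0 < t)
    (q : EuclideanSpace ℝ (Fin d) → ℝ)
    (hq_smooth : ContDiff ℝ (⊤ : ℕ∞) q)
    (hq_nonneg : ∀ x, 0 ≤ q x)
    (hq_int : Integrable q)
    (hq_prob : ∫ x, q x = 1)
    (hq_mom : Integrable (fun x => ‖x‖ * q x))
    (qt : EuclideanSpace ℝ (Fin d) → ℝ)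
    (hqt : qt = fun x =>
      ∫ x0, q x0 * gpdfE d (1 - Real.exp (-2 * t)) (x - Real.exp (-t) • x0))
    (x : EuclideanSpace ℝ (Fin d)) (hx : 0 < qt x) :
    (qt x)⁻¹ •
        (∫ x0, (q x0 * gpdfE d (1 - Real.exp (-2 * t)) (x - Real.exp (-t) • x0)) • x0)
      = Real.exp t • x
        + (Real.exp t - Real.exp (-t)) • gradient (fun y => Real.log (qt y)) x := by
  classical
  set v : ℝ := 1 - Real.exp (-2 * t) with hvdef
  set a : ℝ := Real.exp (-t) with hadef
  have hv : 0 < v := by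
    have h1 : Real.exp (-2 * t) < 1 := Real.exp_lt_one_iff.2 (by linarith)
    simp only [hvdef, sub_pos]
    exact h1
  have ha0 : 0 < a := Real.exp_pos _
  have ha1 : a ≤ 1 := Real.exp_le_one_iff.2 (by linarith)
  set c : ℝ := (2 * π * v) ^ (-(d : ℝ) / 2) with hcdef
  have hc : 0 < c := by positivity
  set g : EuclideanSpace ℝ (Fin d) → ℝ := gpdfE d v with hgdef
  have hgc : Continuous g := gpdfE_continuous
  have hqc : Continuous q := hq_smooth.continuous
  have hg_pos : ∀ y : EuclideanSpace ℝ (Fin d), 0 < g y := fun y => gpdfE_pos hv y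
  have hg_le : ∀ y : EuclideanSpace ℝ (Fin d), g y ≤ c := fun y => gpdfE_le hv y
  -- integrand and its derivative
  set w : EuclideanSpace ℝ (Fin d) → EuclideanSpace ℝ (Fin d) := fun x0 => (q x0 * (-v⁻¹ * g (x - a • x0))) • (x - a • x0) with hwdef
  set B : EuclideanSpace ℝ (Fin d) → ℝ := fun x0 => v⁻¹ * c * ((‖x‖ + 1 + ‖x0‖) * q x0) with hBdef
  have hB_int : Integrable B := by
    have h1 : Integrable (fun x0 : EuclideanSpace ℝ (Fin d) => (‖x‖ + 1) * q x0 + ‖x0‖ * q x0) :=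
      (hq_int.const_mul _).add hq_mom
    have h2 := h1.const_mul (v⁻¹ * c)
    refine h2.congr (Filter.Eventually.of_forall fun x0 => ?_)
    simp only [hBdef]; ring
  -- pointwise derivative bound
  have hw_bound : ∀ (x' : EuclideanSpace ℝ (Fin d)), x' ∈ Metric.ball x 1 → ∀ x0 : EuclideanSpace ℝ (Fin d),
      ‖(q x0 * (-v⁻¹ * g (x' - a • x0))) • (x' - a • x0)‖ ≤ B x0 := by
    intro x' hx' x0
    have hnx' : ‖x'‖ ≤ ‖x‖ + 1 := by
      have h1 := mem_ball_iff_norm.mp hx'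
      have h2 := norm_sub_norm_le x' x
      linarith
    have hvec : ‖x' - a • x0‖ ≤ ‖x‖ + 1 + ‖x0‖ := by
      calc ‖x' - a • x0‖ ≤ ‖x'‖ + ‖a • x0‖ := norm_sub_le _ _
        _ = ‖x'‖ + a * ‖x0‖ := by rw [norm_smul, Real.norm_eq_abs, abs_of_pos ha0]
        _ ≤ ‖x‖ + 1 + 1 * ‖x0‖ := by
            have := norm_nonneg x0
            have h := mul_le_mul_of_nonneg_right ha1 this
            linarith
        _ = ‖x‖ + 1 + ‖x0‖ := by ring
    have hsc : |q x0 * (-v⁻¹ * g (x' - a • x0))| ≤ q x0 * (v⁻¹ * c) := by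
      rw [abs_mul, abs_of_nonneg (hq_nonneg x0), abs_mul, abs_neg, abs_of_nonneg
        (inv_nonneg.2 hv.le), abs_of_pos (hg_pos _)]
      have hvn : (0:ℝ) ≤ v⁻¹ := inv_nonneg.2 hv.le
      exact mul_le_mul_of_nonneg_left
        (mul_le_mul_of_nonneg_left (hg_le (x' - a • x0)) hvn) (hq_nonneg x0)
    calc ‖(q x0 * (-v⁻¹ * g (x' - a • x0))) • (x' - a • x0)‖
        = |q x0 * (-v⁻¹ * g (x' - a • x0))| * ‖x' - a • x0‖ := by
          rw [norm_smul, Real.norm_eq_abs]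
      _ ≤ q x0 * (v⁻¹ * c) * (‖x‖ + 1 + ‖x0‖) := by
          exact mul_le_mul hsc hvec (norm_nonneg _)
            (mul_nonneg (hq_nonneg x0) (by positivity))
      _ = B x0 := by simp only [hBdef]; ring
  -- integrability facts
  have hcont_f : ∀ x' : EuclideanSpace ℝ (Fin d), Continuous (fun x0 : EuclideanSpace ℝ (Fin d) => q x0 * g (x' - a • x0)) :=
    fun x' => hqc.mul (hgc.comp (continuous_const.sub (continuous_id.const_smul a)))
  have hFint : ∀ x' : EuclideanSpace ℝ (Fin d), Integrable (fun x0 : EuclideanSpace ℝ (Fin d) => q x0 * g (x' - a • x0)) := by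
    intro x'
    refine (hq_int.const_mul c).mono' ((hcont_f x').aestronglyMeasurable)
      (Filter.Eventually.of_forall fun x0 => ?_)
    rw [Real.norm_eq_abs, abs_mul, abs_of_nonneg (hq_nonneg x0), abs_of_pos (hg_pos _)]
    have h := mul_le_mul_of_nonneg_left (hg_le (x' - a • x0)) (hq_nonneg x0)
    linarith
  have hwcont : Continuous w := by
    apply Continuous.fun_smul
    · exact hqc.mul (continuous_const.mul
        (hgc.comp (continuous_const.sub (continuous_id.const_smul a))))
    · exact continuous_const.sub (continuous_id.const_smul a)
  have hw_int : Integrable w := by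
    refine hB_int.mono' hwcont.aestronglyMeasurable
      (Filter.Eventually.of_forall fun x0 => ?_)
    exact hw_bound x (Metric.mem_ball_self one_pos) x0
  have hI_int : Integrable (fun x0 : EuclideanSpace ℝ (Fin d) => (q x0 * g (x - a • x0)) • x0) := by
    refine (hq_mom.const_mul c).mono'
      (((hcont_f x).smul continuous_id).aestronglyMeasurable)
      (Filter.Eventually.of_forall fun x0 => ?_)
    rw [norm_smul, Real.norm_eq_abs, abs_mul, abs_of_nonneg (hq_nonneg x0),
      abs_of_pos (hg_pos _)]
    have h := mul_le_mul_of_nonneg_right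
      (mul_le_mul_of_nonneg_left (hg_le (x - a • x0)) (hq_nonneg x0)) (norm_nonneg x0)
    have : c * (‖x0‖ * q x0) = q x0 * c * ‖x0‖ := by ring
    linarith
  set I : EuclideanSpace ℝ (Fin d) := ∫ x0, (q x0 * g (x - a • x0)) • x0 with hIdef
  -- derivative under the integral sign
  set df : EuclideanSpace ℝ (Fin d) → EuclideanSpace ℝ (Fin d) → (EuclideanSpace ℝ (Fin d) →L[ℝ] ℝ) := fun x' x0 =>
    InnerProductSpace.toDual ℝ (EuclideanSpace ℝ (Fin d)) ((q x0 * (-v⁻¹ * g (x' - a • x0))) • (x' - a • x0))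
    with hdfdef
  have hdf_norm : ∀ (x' x0 : EuclideanSpace ℝ (Fin d)),
      ‖df x' x0‖ = ‖(q x0 * (-v⁻¹ * g (x' - a • x0))) • (x' - a • x0)‖ := by
    intro x' x0
    exact (InnerProductSpace.toDual ℝ (EuclideanSpace ℝ (Fin d))).norm_map _
  have hdf_cont : Continuous (df x) :=
    (InnerProductSpace.toDual ℝ (EuclideanSpace ℝ (Fin d))).continuous.comp hwcont
  have hderiv : HasFDerivAt qt (∫ x0, df x x0) x := by
    rw [hqt]
    refine hasFDerivAt_integral_of_dominated_of_fderiv_le (bound := B)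
      (F' := df) (Metric.ball_mem_nhds x one_pos) ?_ ?_ ?_ ?_ hB_int ?_
    · exact Filter.Eventually.of_forall fun x' => (hcont_f x').aestronglyMeasurable
    · exact hFint x
    · exact hdf_cont.aestronglyMeasurable
    · refine Filter.Eventually.of_forall fun x0 => fun x' hx' => ?_
      rw [hdf_norm]
      exact hw_bound x' hx' x0
    · refine Filter.Eventually.of_forall fun x0 => fun x' hx' => ?_
      exact integrand_hasFDerivAt hv (q x0) x0 x'
  have hdf_int : Integrable (df x) := by
    refine hB_int.mono' hdf_cont.aestronglyMeasurable
      (Filter.Eventually.of_forall fun x0 => ?_)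
    rw [hdf_norm]
    exact hw_bound x (Metric.mem_ball_self one_pos) x0
  set G : EuclideanSpace ℝ (Fin d) := ∫ x0, w x0 with hGdef
  have hdf_eq : (∫ x0, df x x0) = InnerProductSpace.toDual ℝ (EuclideanSpace ℝ (Fin d)) G := by
    apply ContinuousLinearMap.ext; intro u
    rw [ContinuousLinearMap.integral_apply hdf_int]
    simp only [hdfdef, InnerProductSpace.toDual_apply_apply]
    rw [hGdef]
    calc (∫ x0, (inner ℝ ((q x0 * (-v⁻¹ * g (x - a • x0))) • (x - a • x0)) u : ℝ))
        = ∫ x0, (inner ℝ u (w x0) : ℝ) := by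
          congr 1; funext x0; exact real_inner_comm _ _
      _ = inner ℝ u (∫ x0, w x0) := integral_inner hw_int u
      _ = inner ℝ (∫ x0, w x0) u := real_inner_comm _ _
  have hgrad : HasGradientAt qt G x := by
    rw [hasGradientAt_iff_hasFDerivAt, ← hdf_eq]
    exact hderiv
  -- compute G
  have hqtx : qt x = ∫ x0, q x0 * g (x - a • x0) := by rw [hqt]
  have hG_eq : G = (-v⁻¹) • (qt x • x - a • I) := by
    rw [hGdef]
    have hw_eq : w = fun x0 =>
        (-v⁻¹) • ((q x0 * g (x - a • x0)) • x - a • ((q x0 * g (x - a • x0)) • x0)) := by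
      funext x0
      simp only [hwdef]
      module
    rw [hw_eq, integral_smul]
    congr 1
    have h1 : Integrable (fun x0 : EuclideanSpace ℝ (Fin d) =>
        (q x0 * g (x - a • x0)) • x) volume := (hFint x).smul_const x
    have h2 : Integrable (fun x0 : EuclideanSpace ℝ (Fin d) =>
        a • ((q x0 * g (x - a • x0)) • x0)) volume := hI_int.smul a
    rw [integral_sub h1 h2, integral_smul, integral_smul_const, hqtx, hIdef]
  -- gradient of log qt
  have hlog : gradient (fun y => Real.log (qt y)) x = (qt x)⁻¹ • G := by
    have h1 : HasFDerivAt qt (InnerProductSpace.toDual ℝ (EuclideanSpace ℝ (Fin d)) G) x :=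
      hasGradientAt_iff_hasFDerivAt.1 hgrad
    have h2 := (Real.hasDerivAt_log (ne_of_gt hx)).comp_hasFDerivAt x h1
    have h3 : (qt x)⁻¹ • InnerProductSpace.toDual ℝ (EuclideanSpace ℝ (Fin d)) G
        = InnerProductSpace.toDual ℝ (EuclideanSpace ℝ (Fin d)) ((qt x)⁻¹ • G) := by
      apply ContinuousLinearMap.ext; intro u
      simp [InnerProductSpace.toDual_apply_apply, real_inner_smul_left]
    rw [h3] at h2
    exact (hasGradientAt_iff_hasFDerivAt.2 h2).gradient
  rw [hlog, hG_eq]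
  -- final algebra
  have hr : qt x ≠ 0 := ne_of_gt hx
  have hvne : v ≠ 0 := ne_of_gt hv
  have hua : Real.exp t * a = 1 := by
    rw [hadef, ← Real.exp_add]; simp
  have hexp2 : Real.exp t * Real.exp (-2 * t) = a := by
    rw [hadef, ← Real.exp_add]; congr 1; ring
  have hdiff : Real.exp t - a = Real.exp t * v := by
    rw [hvdef, mul_sub, mul_one, hexp2]
  rw [hdiff]
  match_scalars
  · field_simp
    linear_combination (-1 : ℝ) * hua
  · field_simp
    ring
end

section
/- Let q = (1/2)N(Re₁, Id) + (1/2)N(-Re₁, Id) on ℝ². Running the unconditional probability flow ODE in reverse from x = (x[1], x[2]) for time T yields a latent x*_T = (c, x[2]) for some c ∈ ℝ with sgn(c) = sgn(x[1]): the second coordinate is unchanged and the first preserves its sign. -/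
open Real

private lemma tanh_hasDerivAt (x : ℝ) :
    HasDerivAt Real.tanh (1 / Real.cosh x ^ 2) x := by
  have h : HasDerivAt (fun y => Real.sinh y / Real.cosh y)
      ((Real.cosh x * Real.cosh x - Real.sinh x * Real.sinh x) / Real.cosh x ^ 2) x :=
    (Real.hasDerivAt_sinh x).div (Real.hasDerivAt_cosh x) (Real.cosh_pos x).ne'
  have : ∀ y, Real.sinh y / Real.cosh y = Real.tanh y := fun y =>
    (Real.tanh_eq_sinh_div_cosh y).symm
  rw [show (fun y => Real.sinh y / Real.cosh y) = Real.tanh from funext this] at h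
  convert h using 1
  have := Real.cosh_sq_sub_sinh_sq x
  ring_nf
  nlinarith [Real.cosh_pos x]

private lemma tanh_nonneg {x : ℝ} (hx : 0 ≤ x) : 0 ≤ Real.tanh x := by
  rw [Real.tanh_eq_sinh_div_cosh]
  exact div_nonneg (Real.sinh_nonneg_iff.2 hx) (Real.cosh_pos x).le

private lemma tanh_le_self {x : ℝ} (hx : 0 ≤ x) : Real.tanh x ≤ x := by
  have hmono : Monotone (fun y => y - Real.tanh y) := by
    apply monotone_of_deriv_nonneg
    · exact fun y => ((hasDerivAt_id' y).sub (tanh_hasDerivAt y)).differentiableAt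
    · intro y
      rw [show deriv (fun y => y - Real.tanh y) y = 1 - 1 / Real.cosh y ^ 2 from
        (((hasDerivAt_id' y).sub (tanh_hasDerivAt y))).deriv]
      have h1 : 1 ≤ Real.cosh y ^ 2 := by nlinarith [Real.one_le_cosh y]
      have h2 : (0:ℝ) < Real.cosh y ^ 2 := by positivity
      have : 1 / Real.cosh y ^ 2 ≤ 1 := by
        rw [div_le_one h2]; exact h1
      linarith
  have := hmono hx
  simpa [Real.tanh_zero] using this

private lemma tanh_neg' (x : ℝ) : Real.tanh (-x) = -Real.tanh x := by
  simp [Real.tanh_eq_sinh_div_cosh, Real.sinh_neg, Real.cosh_neg, neg_div]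

private lemma abs_tanh_le (x : ℝ) : |Real.tanh x| ≤ |x| := by
  rcases le_total 0 x with h | h
  · rw [abs_of_nonneg h, abs_of_nonneg (tanh_nonneg h)]
    exact tanh_le_self h
  · have h' : 0 ≤ -x := by linarith
    calc |Real.tanh x| = |Real.tanh (-x)| := by rw [tanh_neg', abs_neg]
    _ = Real.tanh (-x) := abs_of_nonneg (tanh_nonneg h')
    _ ≤ -x := tanh_le_self h'
    _ = |x| := (abs_of_nonpos h).symm

private lemma mul_tanh_nonneg (x : ℝ) : 0 ≤ x * Real.tanh x := by
  rcases le_total 0 x with h | h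
  · have := tanh_nonneg h
    positivity
  · have h1 : Real.tanh x ≤ 0 := by
      rw [Real.tanh_eq_sinh_div_cosh]
      exact div_nonpos_of_nonpos_of_nonneg (by simpa using Real.sinh_le_sinh.2 h)
        (Real.cosh_pos x).le
    exact mul_nonneg_iff.2 (Or.inr ⟨h, h1⟩)

/-- For `q = (1/2)N(Re₁,Id) + (1/2)N(-Re₁,Id)` on `ℝ²`, the unconditional probability
flow ODE run in reverse, `dx*_t = -(x*_t + ∇ ln q_t(x*_t)) dt`, has velocity
`-R e^{-t} tanh(R e^{-t} x*_t[1]) e₁` (zero in the second coordinate). Starting from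
`x = (x[1], x[2])` and running for time `T` yields a latent `x*_T = (c, x[2])` with
`sgn(c) = sgn(x[1])`. -/
theorem stmt11 (R T : ℝ) (hT : 0 ≤ T) (x1 x2 : ℝ → ℝ)
    (hode1 : ∀ t, HasDerivAt x1
      (-(R * Real.exp (-t) * Real.tanh (R * Real.exp (-t) * x1 t))) t)
    (hode2 : ∀ t, HasDerivAt x2 0 t) :
    ∃ c : ℝ, (x1 T, x2 T) = (c, x2 0) ∧ Real.sign c = Real.sign (x1 0) := by
  -- x2 is constant
  have hx2 : x2 T = x2 0 :=
    is_const_of_deriv_eq_zero (fun s => (hode2 s).differentiableAt)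
      (fun s => (hode2 s).deriv) T 0
  have hcont : Continuous x1 :=
    Differentiable.continuous (fun t => (hode1 t).differentiableAt)
  -- the squared solution
  set w : ℝ → ℝ := fun t => x1 t ^ 2 with hwdef
  have hw : ∀ t, HasDerivAt w
      (2 * x1 t * (-(R * Real.exp (-t) * Real.tanh (R * Real.exp (-t) * x1 t)))) t := by
    intro t
    have : HasDerivAt (fun t => x1 t ^ 2) _ t := ((hode1 t).pow 2)
    simpa [mul_comm, mul_assoc, mul_left_comm] using this
  -- w is nonincreasing
  have hanti : Antitone w := by
    apply antitone_of_deriv_nonpos (fun t => (hw t).differentiableAt)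
    intro t
    rw [(hw t).deriv]
    nlinarith [mul_tanh_nonneg (R * Real.exp (-t) * x1 t)]
  -- the Gronwall-corrected function
  set g : ℝ → ℝ := fun t => x1 t ^ 2 * Real.exp (2 * R ^ 2 * t) with hgdef
  have hexp : ∀ t : ℝ, HasDerivAt (fun s => Real.exp (2 * R ^ 2 * s))
      (Real.exp (2 * R ^ 2 * t) * (2 * R ^ 2)) t := by
    intro t
    have h1 : HasDerivAt (fun s : ℝ => 2 * R ^ 2 * s) (2 * R ^ 2) t := by
      simpa using (hasDerivAt_id t).const_mul (2 * R ^ 2)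
    exact h1.exp
  have hg : ∀ t, HasDerivAt g
      (2 * x1 t * (-(R * Real.exp (-t) * Real.tanh (R * Real.exp (-t) * x1 t)))
        * Real.exp (2 * R ^ 2 * t)
        + x1 t ^ 2 * (Real.exp (2 * R ^ 2 * t) * (2 * R ^ 2))) t := by
    intro t
    exact (hw t).mul (hexp t)
  -- g is nondecreasing on [0, ∞)
  have hmono : MonotoneOn g (Set.Ici (0 : ℝ)) := by
    apply monotoneOn_of_deriv_nonneg (convex_Ici 0)
      (Continuous.continuousOn (by fun_prop))
      (fun t _ => (hg t).differentiableAt.differentiableWithinAt)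
    intro t ht
    rw [interior_Ici] at ht
    rw [(hg t).deriv]
    set z := R * Real.exp (-t) * x1 t with hz
    have h1 : z * Real.tanh z ≤ z ^ 2 := by
      calc z * Real.tanh z ≤ |z * Real.tanh z| := le_abs_self _
      _ = |z| * |Real.tanh z| := abs_mul _ _
      _ ≤ |z| * |z| := by
          apply mul_le_mul_of_nonneg_left (abs_tanh_le z) (abs_nonneg z)
      _ = z ^ 2 := by rw [← abs_mul, ← sq, abs_sq]
    have h2 : z ^ 2 ≤ R ^ 2 * x1 t ^ 2 := by
      have he : Real.exp (-t) ≤ 1 := Real.exp_le_one_iff.2 (by linarith [(Set.mem_Ioi.1 ht).le])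
      have he0 : 0 < Real.exp (-t) := Real.exp_pos _
      have key : 0 ≤ (R * x1 t) ^ 2 * (1 - Real.exp (-t) ^ 2) :=
        mul_nonneg (sq_nonneg _) (by nlinarith)
      rw [hz]
      nlinarith [key]
    have hrew : 2 * x1 t * (-(R * Real.exp (-t) * Real.tanh z))
        = -(2 * (z * Real.tanh z)) := by rw [hz]; ring
    have h3 : 0 ≤ 2 * x1 t * (-(R * Real.exp (-t) * Real.tanh z))
        + x1 t ^ 2 * (2 * R ^ 2) := by rw [hrew]; nlinarith [h1, h2]
    nlinarith [Real.exp_pos (2 * R ^ 2 * t), h3]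
  -- consequences
  have hg0 : ∀ s, 0 ≤ s → x1 0 ^ 2 ≤ x1 s ^ 2 * Real.exp (2 * R ^ 2 * s) := by
    intro s hs
    have := hmono (Set.self_mem_Ici) (Set.mem_Ici.2 hs) hs
    simpa [hgdef] using this
  have hnz : ∀ s, 0 ≤ s → x1 0 ≠ 0 → x1 s ≠ 0 := by
    intro s hs h0 hc
    have h4 := hg0 s hs
    rw [hc] at h4
    have h5 : x1 0 ^ 2 ≤ 0 := by simpa using h4
    exact h0 (pow_eq_zero_iff two_ne_zero |>.mp (le_antisymm h5 (sq_nonneg _)))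
  refine ⟨x1 T, by rw [hx2], ?_⟩
  rcases lt_trichotomy (x1 0) 0 with h | h | h
  · -- negative case
    have hTnz : x1 T ≠ 0 := hnz T hT (ne_of_lt h)
    have hTneg : x1 T < 0 := by
      by_contra hcon
      push_neg at hcon
      have hTpos : 0 < x1 T := lt_of_le_of_ne hcon (Ne.symm hTnz)
      obtain ⟨s, hs, hs0⟩ := intermediate_value_Icc hT hcont.continuousOn
        (Set.mem_Icc.2 ⟨h.le, hTpos.le⟩)
      exact hnz s hs.1 (ne_of_lt h) hs0
    rw [Real.sign_of_neg hTneg, Real.sign_of_neg h]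
  · -- zero case
    have hw0 : w T ≤ w 0 := hanti hT
    have : x1 T = 0 := by
      have h1 : x1 T ^ 2 ≤ 0 := by simpa [hwdef, h] using hw0
      exact pow_eq_zero_iff (two_ne_zero) |>.mp (le_antisymm h1 (sq_nonneg _))
    rw [this, h]
  · -- positive case
    have hTnz : x1 T ≠ 0 := hnz T hT (ne_of_gt h)
    have hTpos : 0 < x1 T := by
      by_contra hcon
      push_neg at hcon
      have hTneg : x1 T < 0 := lt_of_le_of_ne hcon hTnz
      obtain ⟨s, hs, hs0⟩ := intermediate_value_Icc' hT hcont.continuousOn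
        (Set.mem_Icc.2 ⟨hTneg.le, h.le⟩)
      exact hnz s hs.1 (ne_of_gt h) hs0
    rw [Real.sign_of_pos hTpos, Real.sign_of_pos h]
end

section
/- Let q = uniform mixture of N(μ, Id) over μ ∈ {R,-R}^d, let A = (e_{i₁} | ... | e_{i_m})ᵀ be an inpainting matrix, y = Ax* for some x* ∈ {R,-R}^d. Then for each coordinate ℓ ∉ {i₁,...,i_m}, the DPS guidance term v_t^{DPS}(x) = ∇μ_t(x) Aᵀ(y - Aμ_t(x))/σ² has zero ℓ-th component, so the DPS-ODE restricted to unmeasured coordinates coincides with the unconditional probability flow ODE. -/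
open Real Matrix

/-- For `q` the uniform Gaussian mixture over `{R,-R}^d`, an inpainting matrix
`A = (e_{i₁} | ⋯ | e_{i_m})ᵀ`, and `y = A x*` with `x* ∈ {R,-R}^d`, the DPS guidance
term `v_t^{DPS}(x) = ∇μ_t(x) Aᵀ(y - Aμ_t(x))/σ²` (with the coordinatewise denoiser
`μ_t(x) = e^{-t}x + (1-e^{-2t})R tanh(Re^{-t}x)` and its diagonal Jacobian
`e^{-t}Id + (1-e^{-2t})e^{-t}R² diag(sech²(Re^{-t}x))`) vanishes on every unmeasured
coordinate `ℓ ∉ {i₁,…,i_m}`; hence the DPS-ODE drift restricted to unmeasured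
coordinates coincides with the drift of the unconditional probability flow ODE. -/
theorem stmt16 (d m : ℕ) (R σ t : ℝ) (hR : 0 < R) (hσ : 0 < σ) (ht : 0 < t)
    (idx : Fin m → Fin d) (hidx : Function.Injective idx)
    (xstar : Fin d → ℝ) (hxstar : ∀ i, xstar i = R ∨ xstar i = -R)
    (A : Matrix (Fin m) (Fin d) ℝ) (hA : ∀ j i, A j i = if idx j = i then 1 else 0)
    (y : Fin m → ℝ) (hy : y = A.mulVec xstar)
    (x μt v : Fin d → ℝ)
    (hμt : ∀ i, μt i = Real.exp (-t) * x i
      + (1 - Real.exp (-2 * t)) * R * Real.tanh (R * Real.exp (-t) * x i))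
    (hv : ∀ i, v i =
      (Real.exp (-t) + (1 - Real.exp (-2 * t)) * Real.exp (-t) * R ^ 2
          * (1 / Real.cosh (R * Real.exp (-t) * x i)) ^ 2)
        * (Aᵀ.mulVec (y - A.mulVec μt)) i / σ ^ 2) :
    ∀ ℓ : Fin d, (∀ j, idx j ≠ ℓ) →
      v ℓ = 0
      ∧ R * Real.exp (-t) * Real.tanh (R * Real.exp (-t) * x ℓ) + v ℓ
          = R * Real.exp (-t) * Real.tanh (R * Real.exp (-t) * x ℓ) := by
  intro ℓ hℓ
  have hz : v ℓ = 0 := by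
    rw [hv ℓ]
    have : (Aᵀ.mulVec (y - A.mulVec μt)) ℓ = 0 := by
      simp only [Matrix.mulVec, dotProduct, Matrix.transpose_apply]
      apply Finset.sum_eq_zero
      intro j _
      rw [hA j ℓ, if_neg (hℓ j)]
      ring
    rw [this]
    ring
  exact ⟨hz, by rw [hz]; ring⟩
end

section
/- Let the drift of a C¹ curve x_t in ℝ² in the direction v⊥ = (-v₂, v₁) be ⟨dx_t/dt, v⊥⟩ = -R e^{-(T-t)} tanh(R e^{-(T-t)} x_t[1]) v₂ with v₂ ≥ 0. If tanh(R e^{-(T-t)} x_t[1]) ≥ 1 - ε for all t ∈ [T - log(1/δ'), T] and x_t[1] ≥ 0 for all t ∈ [0, T], then ⟨x_T, v⊥⟩ - ⟨x_0, v⊥⟩ ≤ -(1-ε) R v₂ (1 - δ'). -/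
open Real

/-- Let `x_t = (x₁(t), x₂(t))` be a C¹ curve in `ℝ²` whose drift in the direction
`v⊥ = (-v₂, v₁)` is `⟨dx_t/dt, v⊥⟩ = -R e^{-(T-t)} tanh(R e^{-(T-t)} x₁(t)) v₂` with
`v₂ ≥ 0`. If `tanh(R e^{-(T-t)} x₁(t)) ≥ 1 - ε` for all `t ∈ [T - log(1/δ'), T]` and
`x₁(t) ≥ 0` for all `t ∈ [0,T]`, then
`⟨x_T, v⊥⟩ - ⟨x_0, v⊥⟩ ≤ -(1-ε) R v₂ (1 - δ')`. -/
theorem stmt18 (R T v₁ v₂ ε δ' : ℝ) (hR : 0 < R) (hv₂ : 0 ≤ v₂)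
    (hε : 0 < ε) (hε1 : ε < 1) (hδ' : 0 < δ') (hδ'1 : δ' < 1)
    (hTδ : Real.log (1 / δ') ≤ T)
    (x1 x2 : ℝ → ℝ)
    (hdrift : ∀ t ∈ Set.Icc (0:ℝ) T,
      HasDerivAt (fun s => -v₂ * x1 s + v₁ * x2 s)
        (-(R * Real.exp (-(T - t)) * Real.tanh (R * Real.exp (-(T - t)) * x1 t)) * v₂) t)
    (htanh : ∀ t ∈ Set.Icc (T - Real.log (1 / δ')) T,
      1 - ε ≤ Real.tanh (R * Real.exp (-(T - t)) * x1 t))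
    (hx1 : ∀ t ∈ Set.Icc (0:ℝ) T, 0 ≤ x1 t) :
    (-v₂ * x1 T + v₁ * x2 T) - (-v₂ * x1 0 + v₁ * x2 0)
      ≤ -((1 - ε) * R * v₂ * (1 - δ')) := by
  set f : ℝ → ℝ := fun s => -v₂ * x1 s + v₁ * x2 s with hf
  set a := T - Real.log (1 / δ') with ha
  have hlog : 0 ≤ Real.log (1 / δ') :=
    Real.log_nonneg (by rw [le_div_iff₀ hδ']; linarith)
  have haT : a ≤ T := by simp only [ha]; linarith
  have ha0 : 0 ≤ a := by simp only [ha]; linarith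
  have hsub : Set.Icc a T ⊆ Set.Icc 0 T := Set.Icc_subset_Icc ha0 le_rfl
  have htanh0 : ∀ t ∈ Set.Icc (0:ℝ) T,
      0 ≤ Real.tanh (R * Real.exp (-(T - t)) * x1 t) := by
    intro t ht
    rw [Real.tanh_eq_sinh_div_cosh]
    exact div_nonneg (Real.sinh_nonneg_iff.mpr
      (mul_nonneg (by positivity) (hx1 t ht))) (Real.cosh_pos _).le
  -- Part 1 : f is antitone on [0, T]
  have hcont : ContinuousOn f (Set.Icc 0 T) :=
    fun t ht => (hdrift t ht).continuousAt.continuousWithinAt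
  have hderiv : ∀ t ∈ interior (Set.Icc (0:ℝ) T),
      deriv f t = -(R * Real.exp (-(T - t)) * Real.tanh (R * Real.exp (-(T - t)) * x1 t)) * v₂ := by
    intro t ht
    exact (hdrift t (interior_subset ht)).deriv
  have hanti : AntitoneOn f (Set.Icc 0 T) := by
    apply antitoneOn_of_deriv_nonpos (convex_Icc 0 T) hcont
    · intro t ht
      exact ((hdrift t (interior_subset ht)).differentiableAt).differentiableWithinAt
    · intro t ht
      rw [interior_Icc] at ht
      rw [(hdrift t (Set.Ioo_subset_Icc_self ht)).deriv]
      have h1 : 0 ≤ Real.tanh (R * Real.exp (-(T - t)) * x1 t) :=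
        htanh0 t (Set.Ioo_subset_Icc_self ht)
      have h2 : (0:ℝ) < R * Real.exp (-(T - t)) := by positivity
      nlinarith [mul_nonneg (mul_nonneg h2.le h1) hv₂]
  -- Part 2 : h = f + g is antitone on [a, T]
  set g : ℝ → ℝ := fun t => (1 - ε) * R * v₂ * Real.exp (-(T - t)) with hg
  have hgderiv : ∀ t : ℝ, HasDerivAt g ((1 - ε) * R * v₂ * Real.exp (-(T - t))) t := by
    intro t
    have h := ((Real.hasDerivAt_exp (t - T)).comp t
      ((hasDerivAt_id t).sub_const T)).const_mul ((1 - ε) * R * v₂)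
    simp only [hg, neg_sub]
    simpa [Function.comp, mul_one] using h
  have hhanti : AntitoneOn (fun t => f t + g t) (Set.Icc a T) := by
    apply antitoneOn_of_deriv_nonpos (convex_Icc a T)
    · exact (hcont.mono hsub).add (Continuous.continuousOn (by fun_prop))
    · intro t ht
      rw [interior_Icc] at ht
      exact (((hdrift t (hsub (Set.Ioo_subset_Icc_self ht))).add
        (hgderiv t)).differentiableAt).differentiableWithinAt
    · intro t ht
      rw [interior_Icc] at ht
      rw [show (fun t => f t + g t) = f + g from rfl, ((hdrift t (hsub (Set.Ioo_subset_Icc_self ht))).add (hgderiv t)).deriv]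
      have h1 : 1 - ε ≤ Real.tanh (R * Real.exp (-(T - t)) * x1 t) :=
        htanh t (Set.Ioo_subset_Icc_self ht)
      have h2 : (0:ℝ) < R * Real.exp (-(T - t)) := by positivity
      nlinarith [mul_le_mul_of_nonneg_left (mul_le_mul_of_nonneg_left h1 h2.le) hv₂]
  have key2 : f T + g T ≤ f a + g a :=
    hhanti (Set.left_mem_Icc.mpr haT) (Set.right_mem_Icc.mpr haT) haT
  have key1 : f a ≤ f 0 :=
    hanti (Set.left_mem_Icc.mpr (by linarith)) ⟨ha0, haT⟩ ha0
  have hgT : g T = (1 - ε) * R * v₂ := by simp [hg]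
  have hga : g a = (1 - ε) * R * v₂ * δ' := by
    have : Real.exp (-(T - a)) = δ' := by
      rw [ha]
      have : -(T - (T - Real.log (1 / δ'))) = Real.log δ' := by
        rw [Real.log_div one_ne_zero (ne_of_gt hδ'), Real.log_one]; ring
      rw [this, Real.exp_log hδ']
    simp only [hg]
    rw [this]
  have hfin : -((1 - ε) * R * v₂ * (1 - δ'))
      = (1 - ε) * R * v₂ * δ' - (1 - ε) * R * v₂ := by ring
  have hT0 : f T - f 0 ≤ -((1 - ε) * R * v₂ * (1 - δ')) := by
    rw [hfin]; rw [hgT, hga] at key2; linarith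
  simpa [hf] using hT0
end
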